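/- (Taylor–Taylor formula.) Let Ω ⊆ M_nc be a similarity invariant right admissible nc set, f : Ω → N_nc a nc function, n ≥ 1, and X, Y ∈ Ω_n. For ℓ ≥ 0, the matrix bidiag(Y,...,Y; X−Y,...,X−Y) with ℓ+1 diagonal blocks Y and ℓ superdiagonal blocks X−Y belongs to Ω_{n(ℓ+1)}; let D_ℓ ∈ N^{n×n} be the (1, ℓ+1) block of f applied to it. For N ≥ 0, the matrix bidiag(Y,...,Y,X; X−Y,...,X−Y) with N+1 diagonal blocks Y followed by a diagonal block X and with N+1 superdiagonal blocks X−Y belongs to Ω_{n(N+2)}; let R_{N+1} ∈ N^{n×n} be the (1, N+2) block of f applied to it. Then for every N ≥ 0: f(X) = Σ_{ℓ=0}^{N} D_ℓ + R_{N+1}. (Here D_ℓ = Δ_R^ℓ f(Y,...,Y)(X−Y,...,X−Y) and R_{N+1} = Δ_R^{N+1} f(Y,...,Y,X)(X−Y,...,X−Y).) -/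
import Mathlib


open Matrix

/-- Product of a scalar matrix with a matrix over a module. -/
def scalMul {R : Type*} [CommRing R] {M : Type*} [AddCommGroup M] [Module R M]
    {p n m : ℕ} (S : Matrix (Fin p) (Fin n) R) (X : Matrix (Fin n) (Fin m) M) :
    Matrix (Fin p) (Fin m) M :=
  Matrix.of fun i j => ∑ k, S i k • X k j

/-- Product of a matrix over a module with a scalar matrix. -/
def mulScal {R : Type*} [CommRing R] {M : Type*} [AddCommGroup M] [Module R M]
    {n m q : ℕ} (X : Matrix (Fin n) (Fin m) M) (T : Matrix (Fin m) (Fin q) R) :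
    Matrix (Fin n) (Fin q) M :=
  Matrix.of fun i j => ∑ k, T k j • X i k

/-- Direct sum of two square matrices over a module. -/
def dSum {M : Type*} [AddCommGroup M] {n m : ℕ}
    (X : Matrix (Fin n) (Fin n) M) (Y : Matrix (Fin m) (Fin m) M) :
    Matrix (Fin (n + m)) (Fin (n + m)) M :=
  (Matrix.reindex finSumFinEquiv finSumFinEquiv) (Matrix.fromBlocks X 0 0 Y)

/-- Block upper triangular 2×2 block matrix `[[X, Z],[0, Y]]`. -/
def upTri {M : Type*} [AddCommGroup M] {n m : ℕ}
    (X : Matrix (Fin n) (Fin n) M) (Z : Matrix (Fin n) (Fin m) M)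
    (Y : Matrix (Fin m) (Fin m) M) :
    Matrix (Fin (n + m)) (Fin (n + m)) M :=
  (Matrix.reindex finSumFinEquiv finSumFinEquiv) (Matrix.fromBlocks X Z 0 Y)

/-- A noncommutative (nc) set: closed under direct sums. -/
def IsNCSet {M : Type*} [AddCommGroup M]
    (Ω : ∀ n : ℕ, Set (Matrix (Fin n) (Fin n) M)) : Prop :=
  ∀ (n m : ℕ) (X : Matrix (Fin n) (Fin n) M) (Y : Matrix (Fin m) (Fin m) M),
    X ∈ Ω n → Y ∈ Ω m → dSum X Y ∈ Ω (n + m)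

/-- `f` respects direct sums on `Ω`. -/
def RespectsDirSums {M N : Type*} [AddCommGroup M] [AddCommGroup N]
    (Ω : ∀ n : ℕ, Set (Matrix (Fin n) (Fin n) M))
    (f : ∀ n : ℕ, Matrix (Fin n) (Fin n) M → Matrix (Fin n) (Fin n) N) : Prop :=
  ∀ (n m : ℕ) (X : Matrix (Fin n) (Fin n) M) (Y : Matrix (Fin m) (Fin m) M),
    X ∈ Ω n → Y ∈ Ω m → f (n + m) (dSum X Y) = dSum (f n X) (f m Y)

/-- `f` respects similarities on `Ω`. -/
def RespectsSim (R : Type*) [CommRing R] {M N : Type*} [AddCommGroup M] [Module R M]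
    [AddCommGroup N] [Module R N]
    (Ω : ∀ n : ℕ, Set (Matrix (Fin n) (Fin n) M))
    (f : ∀ n : ℕ, Matrix (Fin n) (Fin n) M → Matrix (Fin n) (Fin n) N) : Prop :=
  ∀ (n : ℕ) (X : Matrix (Fin n) (Fin n) M) (S T : Matrix (Fin n) (Fin n) R),
    X ∈ Ω n → S * T = 1 → T * S = 1 → scalMul S (mulScal X T) ∈ Ω n →
    f n (scalMul S (mulScal X T)) = scalMul S (mulScal (f n X) T)

/-- `f` respects intertwining on `Ω`: `X T = T Y` implies `f(X) T = T f(Y)`. -/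
def RespectsIntertwining (R : Type*) [CommRing R] {M N : Type*} [AddCommGroup M]
    [Module R M] [AddCommGroup N] [Module R N]
    (Ω : ∀ n : ℕ, Set (Matrix (Fin n) (Fin n) M))
    (f : ∀ n : ℕ, Matrix (Fin n) (Fin n) M → Matrix (Fin n) (Fin n) N) : Prop :=
  ∀ (n m : ℕ) (X : Matrix (Fin n) (Fin n) M) (Y : Matrix (Fin m) (Fin m) M)
    (T : Matrix (Fin n) (Fin m) R),
    X ∈ Ω n → Y ∈ Ω m → mulScal X T = scalMul T Y →
    mulScal (f n X) T = scalMul T (f m Y)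

/-- `Ω` is invariant under similarities. -/
def SimInvariant (R : Type*) [CommRing R] {M : Type*} [AddCommGroup M] [Module R M]
    (Ω : ∀ n : ℕ, Set (Matrix (Fin n) (Fin n) M)) : Prop :=
  ∀ (n : ℕ) (X : Matrix (Fin n) (Fin n) M) (S T : Matrix (Fin n) (Fin n) R),
    X ∈ Ω n → S * T = 1 → T * S = 1 → scalMul S (mulScal X T) ∈ Ω n

/-- `Ω` is a right admissible nc set. -/
def RightAdmissible (R : Type*) [CommRing R] {M : Type*} [AddCommGroup M] [Module R M]
    (Ω : ∀ n : ℕ, Set (Matrix (Fin n) (Fin n) M)) : Prop :=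
  ∀ (n m : ℕ) (X : Matrix (Fin n) (Fin n) M) (Y : Matrix (Fin m) (Fin m) M)
    (Z : Matrix (Fin n) (Fin m) M), X ∈ Ω n → Y ∈ Ω m →
    ∃ r : Rˣ, upTri X ((r : R) • Z) Y ∈ Ω (n + m)

/-- Block upper bidiagonal matrix with `k+1` diagonal blocks `D i` and `k` superdiagonal
blocks `Z i`, all of size `n`. -/
def bidiagC {α : Type*} [Zero α] {n : ℕ} (k : ℕ)
    (D : Fin (k + 1) → Matrix (Fin n) (Fin n) α)
    (Z : Fin k → Matrix (Fin n) (Fin n) α) :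
    Matrix (Fin ((k + 1) * n)) (Fin ((k + 1) * n)) α :=
  (Matrix.reindex finProdFinEquiv finProdFinEquiv)
    (Matrix.of fun p q : Fin (k + 1) × Fin n =>
      if p.1 = q.1 then D p.1 p.2 q.2
      else if h : (p.1 : ℕ) + 1 = (q.1 : ℕ) then
        Z ⟨(p.1 : ℕ), by have := q.1.isLt; omega⟩ p.2 q.2
      else 0)

/-- The `(a, b)` block (of size `n`) of a `(k+1)×(k+1)`-block matrix. -/
def blkAt {α : Type*} {n : ℕ} (k : ℕ) (a b : Fin (k + 1))
    (W : Matrix (Fin ((k + 1) * n)) (Fin ((k + 1) * n)) α) :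
    Matrix (Fin n) (Fin n) α :=
  Matrix.of fun p q => W (finProdFinEquiv (a, p)) (finProdFinEquiv (b, q))

section Helpers

variable {R : Type*} [CommRing R] {M : Type*} [AddCommGroup M] [Module R M]

/-- Generalized scalar-matrix times module-matrix product. -/
def sMul {p n m : Type*} [Fintype n] (S : Matrix p n R) (X : Matrix n m M) :
    Matrix p m M :=
  Matrix.of fun i j => ∑ k, S i k • X k j

/-- Generalized module-matrix times scalar-matrix product. -/
def muS {n m q : Type*} [Fintype m] (X : Matrix n m M) (T : Matrix m q R) :
    Matrix n q M :=
  Matrix.of fun i j => ∑ k, T k j • X i k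

lemma scalMul_eq_sMul {p n m : ℕ} (S : Matrix (Fin p) (Fin n) R)
    (X : Matrix (Fin n) (Fin m) M) : scalMul S X = sMul S X := rfl

lemma mulScal_eq_muS {n m q : ℕ} (X : Matrix (Fin n) (Fin m) M)
    (T : Matrix (Fin m) (Fin q) R) : mulScal X T = muS X T := rfl

lemma sMul_reindex {p p' n n' m m' : Type*} [Fintype n] [Fintype n']
    (e₁ : p ≃ p') (e₂ : n ≃ n') (e₃ : m ≃ m') (S : Matrix p n R) (X : Matrix n m M) :
    sMul (Matrix.reindex e₁ e₂ S) (Matrix.reindex e₂ e₃ X)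
      = Matrix.reindex e₁ e₃ (sMul S X) := by
  ext i j
  simp only [sMul, Matrix.reindex_apply, Matrix.submatrix_apply, Matrix.of_apply]
  exact e₂.symm.sum_comp (fun k => S (e₁.symm i) k • X k (e₃.symm j))

lemma muS_reindex {n n' m m' q q' : Type*} [Fintype m] [Fintype m']
    (e₁ : n ≃ n') (e₂ : m ≃ m') (e₃ : q ≃ q') (X : Matrix n m M) (T : Matrix m q R) :
    muS (Matrix.reindex e₁ e₂ X) (Matrix.reindex e₂ e₃ T)
      = Matrix.reindex e₁ e₃ (muS X T) := by
  ext i j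
  simp only [muS, Matrix.reindex_apply, Matrix.submatrix_apply, Matrix.of_apply]
  exact e₂.symm.sum_comp (fun k => T k (e₃.symm j) • X (e₁.symm i) k)

lemma sMul_fromBlocks {p₁ p₂ n₁ n₂ m₁ m₂ : Type*} [Fintype n₁] [Fintype n₂]
    (A : Matrix p₁ n₁ R) (B : Matrix p₁ n₂ R) (C : Matrix p₂ n₁ R) (D : Matrix p₂ n₂ R)
    (P : Matrix n₁ m₁ M) (Q : Matrix n₁ m₂ M) (P' : Matrix n₂ m₁ M) (Q' : Matrix n₂ m₂ M) :
    sMul (Matrix.fromBlocks A B C D) (Matrix.fromBlocks P Q P' Q') =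
      Matrix.fromBlocks (sMul A P + sMul B P') (sMul A Q + sMul B Q')
        (sMul C P + sMul D P') (sMul C Q + sMul D Q') := by
  ext i j
  cases i <;> cases j <;>
    simp [sMul, Fintype.sum_sum_type, Matrix.fromBlocks]

lemma muS_fromBlocks {n₁ n₂ m₁ m₂ q₁ q₂ : Type*} [Fintype m₁] [Fintype m₂]
    (P : Matrix n₁ m₁ M) (Q : Matrix n₁ m₂ M) (P' : Matrix n₂ m₁ M) (Q' : Matrix n₂ m₂ M)
    (A : Matrix m₁ q₁ R) (B : Matrix m₁ q₂ R) (C : Matrix m₂ q₁ R) (D : Matrix m₂ q₂ R) :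
    muS (Matrix.fromBlocks P Q P' Q') (Matrix.fromBlocks A B C D) =
      Matrix.fromBlocks (muS P A + muS Q C) (muS P B + muS Q D)
        (muS P' A + muS Q' C) (muS P' B + muS Q' D) := by
  ext i j
  cases i <;> cases j <;>
    simp [muS, Fintype.sum_sum_type, Matrix.fromBlocks]

lemma sMul_one {n m : Type*} [Fintype n] [DecidableEq n] (X : Matrix n m M) :
    sMul (1 : Matrix n n R) X = X := by
  ext i j
  simp [sMul, Matrix.one_apply, ite_smul, Finset.sum_ite_eq]

lemma muS_one {n m : Type*} [Fintype m] [DecidableEq m] (X : Matrix n m M) :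
    muS X (1 : Matrix m m R) = X := by
  ext i j
  simp [muS, Matrix.one_apply, ite_smul, Finset.sum_ite_eq']

lemma sMul_smul_one {n m : Type*} [Fintype n] [DecidableEq n] (c : R) (X : Matrix n m M) :
    sMul (c • (1 : Matrix n n R)) X = c • X := by
  ext i j
  simp [sMul, Matrix.one_apply, smul_ite, ite_smul, Finset.sum_ite_eq]

lemma muS_smul_one {n m : Type*} [Fintype m] [DecidableEq m] (c : R) (X : Matrix n m M) :
    muS X (c • (1 : Matrix m m R)) = c • X := by
  ext i j
  simp [muS, Matrix.one_apply, smul_ite, ite_smul, Finset.sum_ite_eq']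

lemma sMul_zero {p n m : Type*} [Fintype n] (S : Matrix p n R) :
    sMul S (0 : Matrix n m M) = 0 := by
  ext i j; simp [sMul]

lemma zero_sMul {p n m : Type*} [Fintype n] (X : Matrix n m M) :
    sMul (0 : Matrix p n R) X = 0 := by
  ext i j; simp [sMul]

lemma muS_zero {n m q : Type*} [Fintype m] (X : Matrix n m M) :
    muS X (0 : Matrix m q R) = 0 := by
  ext i j; simp [muS]

lemma zero_muS {n m q : Type*} [Fintype m] (T : Matrix m q R) :
    muS (0 : Matrix n m M) T = 0 := by
  ext i j; simp [muS]

lemma muS_neg {n m q : Type*} [Fintype m] (X : Matrix n m M) (T : Matrix m q R) :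
    muS X (-T) = -(muS X T) := by
  ext i j; simp [muS]

end Helpers
section Helpers2

variable {R : Type*} [CommRing R] {M : Type*} [AddCommGroup M] [Module R M]

lemma sum_blocks {β : Type*} [AddCommMonoid β] {m n : ℕ} (g : Fin (m * n) → β) :
    ∑ k, g k = ∑ b : Fin m, ∑ q : Fin n, g (finProdFinEquiv (b, q)) := by
  rw [← Equiv.sum_comp (finProdFinEquiv) g, Fintype.sum_prod_type]

lemma sum_fin_val {β : Type*} [AddCommMonoid β] {m : ℕ} (c : ℕ) (g : Fin m → β) :
    (∑ b : Fin m, if (b : ℕ) = c then g b else 0) = if h : c < m then g ⟨c, h⟩ else 0 := by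
  split_ifs with h
  · rw [Finset.sum_eq_single (⟨c, h⟩ : Fin m)]
    · simp
    · intro b _ hb
      rw [if_neg]
      exact fun hbc => hb (Fin.ext hbc)
    · simp
  · apply Finset.sum_eq_zero
    intro b _
    rw [if_neg]
    exact fun hb => h (hb ▸ b.isLt)

lemma collapseL {β : Type*} [AddCommMonoid β] {m n : ℕ} (c₀ : ℕ) (q₀ : Fin n)
    (g : Fin m → Fin n → β) :
    (∑ c : Fin m, ∑ r : Fin n, if (c : ℕ) = c₀ ∧ r = q₀ then g c r else 0) =
      if h : c₀ < m then g ⟨c₀, h⟩ q₀ else 0 := by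
  have : ∀ c : Fin m, (∑ r : Fin n, if (c : ℕ) = c₀ ∧ r = q₀ then g c r else 0)
      = if (c : ℕ) = c₀ then g c q₀ else 0 := by
    intro c
    by_cases hc : (c : ℕ) = c₀
    · simp [hc]
    · simp [hc]
  rw [Finset.sum_congr rfl (fun c _ => this c), sum_fin_val]

lemma collapseR {β : Type*} [AddCommMonoid β] {m n : ℕ} (c₀ : ℕ) (q₀ : Fin n)
    (g : Fin m → Fin n → β) :
    (∑ c : Fin m, ∑ r : Fin n, if c₀ = (c : ℕ) ∧ q₀ = r then g c r else 0) =
      if h : c₀ < m then g ⟨c₀, h⟩ q₀ else 0 := by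
  rw [← collapseL c₀ q₀ g]
  congr 1; ext c; congr 1; ext r
  congr 1
  simp [eq_comm, and_comm]

lemma bidiagC_apply {α : Type*} [Zero α] {n : ℕ} (k : ℕ)
    (D : Fin (k + 1) → Matrix (Fin n) (Fin n) α) (Z : Fin k → Matrix (Fin n) (Fin n) α)
    (a b : Fin (k + 1)) (p q : Fin n) :
    bidiagC k D Z (finProdFinEquiv (a, p)) (finProdFinEquiv (b, q)) =
      if a = b then D a p q
      else if h : (a : ℕ) + 1 = (b : ℕ) then Z ⟨(a : ℕ), by omega⟩ p q else 0 := by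
  simp [bidiagC]

lemma blkAt_apply {α : Type*} {n : ℕ} (k : ℕ) (a b : Fin (k + 1))
    (W : Matrix (Fin ((k + 1) * n)) (Fin ((k + 1) * n)) α) (p q : Fin n) :
    blkAt k a b W p q = W (finProdFinEquiv (a, p)) (finProdFinEquiv (b, q)) := rfl

lemma mem_cast {M : Type*} [AddCommGroup M] (Ω : ∀ n : ℕ, Set (Matrix (Fin n) (Fin n) M))
    {a b : ℕ} (h : a = b) (W : Matrix (Fin a) (Fin a) M) (hW : W ∈ Ω a) :
    (Matrix.reindex (finCongr h) (finCongr h) W) ∈ Ω b := by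
  subst h
  simpa using hW

end Helpers2
section Helpers3

variable {R : Type*} [CommRing R] {M : Type*} [AddCommGroup M] [Module R M]
variable {N : Type*} [AddCommGroup N] [Module R N]

lemma upTri_mem (Ω : ∀ n : ℕ, Set (Matrix (Fin n) (Fin n) M))
    (hsi : SimInvariant R Ω) (hra : RightAdmissible R Ω)
    {n m : ℕ} (X : Matrix (Fin n) (Fin n) M) (Z : Matrix (Fin n) (Fin m) M)
    (Y : Matrix (Fin m) (Fin m) M) (hX : X ∈ Ω n) (hY : Y ∈ Ω m) :
    upTri X Z Y ∈ Ω (n + m) := by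
  obtain ⟨r, hr⟩ := hra n m X Y Z hX hY
  set e := (finSumFinEquiv : Fin n ⊕ Fin m ≃ Fin (n + m)) with he
  set S : Matrix (Fin (n + m)) (Fin (n + m)) R :=
    Matrix.reindex e e (Matrix.fromBlocks 1 0 0 ((r : R) • 1)) with hS
  set S' : Matrix (Fin (n + m)) (Fin (n + m)) R :=
    Matrix.reindex e e (Matrix.fromBlocks 1 0 0 (((r⁻¹ : Rˣ) : R) • 1)) with hS'
  have hmul : ∀ (a b : R), a * b = 1 →
      (Matrix.reindex e e (Matrix.fromBlocks (1 : Matrix (Fin n) (Fin n) R) 0 0 (a • 1))) *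
      (Matrix.reindex e e (Matrix.fromBlocks 1 0 0 (b • 1))) = 1 := by
    intro a b hab
    rw [Matrix.reindex_apply, Matrix.reindex_apply, Matrix.submatrix_mul_equiv,
      Matrix.fromBlocks_multiply]
    have : (a • (1 : Matrix (Fin m) (Fin m) R)) * (b • 1) = 1 := by
      rw [Matrix.smul_mul, Matrix.mul_smul, smul_smul, hab, one_smul, one_mul]
    simp only [Matrix.mul_one, Matrix.one_mul, Matrix.mul_zero, Matrix.zero_mul,
      add_zero, zero_add, this, Matrix.fromBlocks_one]
    exact Matrix.submatrix_one_equiv e.symm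
  have hSS' : S * S' = 1 := hmul _ _ (Units.mul_inv r)
  have hS'S : S' * S = 1 := hmul _ _ (Units.inv_mul r)
  have key : scalMul S (mulScal (upTri X ((r : R) • Z) Y) S') = upTri X Z Y := by
    rw [scalMul_eq_sMul, mulScal_eq_muS, hS, hS']
    show sMul _ (muS (Matrix.reindex e e (Matrix.fromBlocks X ((r : R) • Z) 0 Y)) _) = _
    rw [muS_reindex, sMul_reindex, muS_fromBlocks, sMul_fromBlocks]
    unfold upTri
    congr 1
    simp only [muS_one, muS_zero, zero_muS, muS_smul_one, sMul_one, sMul_zero, zero_sMul,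
      add_zero, zero_add, smul_smul, Units.inv_mul, Units.mul_inv, one_smul]
    rw [sMul_smul_one, smul_smul, Units.mul_inv, one_smul]
  have := hsi (n + m) (upTri X ((r : R) • Z) Y) S S' hr hSS' hS'S
  rwa [key] at this

lemma tri_conj {P : Type*} [AddCommGroup P] [Module R P] {n m : ℕ}
    (T : Matrix (Fin n) (Fin m) R)
    (X' : Matrix (Fin n) (Fin n) P) (Y' : Matrix (Fin m) (Fin m) P) :
    sMul (Matrix.reindex (finSumFinEquiv : Fin n ⊕ Fin m ≃ Fin (n + m)) finSumFinEquiv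
        (Matrix.fromBlocks 1 T 0 1))
      (muS (Matrix.reindex (finSumFinEquiv : Fin n ⊕ Fin m ≃ Fin (n + m)) finSumFinEquiv
          (Matrix.fromBlocks X' 0 0 Y'))
        (Matrix.reindex (finSumFinEquiv : Fin n ⊕ Fin m ≃ Fin (n + m)) finSumFinEquiv
          (Matrix.fromBlocks 1 (-T) 0 1))) =
    Matrix.reindex (finSumFinEquiv : Fin n ⊕ Fin m ≃ Fin (n + m)) finSumFinEquiv
      (Matrix.fromBlocks X' (-(muS X' T) + sMul T Y') 0 Y') := by
  rw [muS_reindex, sMul_reindex, muS_fromBlocks, sMul_fromBlocks]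
  congr 1
  simp only [muS_one, muS_zero, zero_muS, muS_neg, sMul_one, sMul_zero, zero_sMul,
    add_zero, zero_add, neg_zero]

lemma respects_intert (Ω : ∀ n : ℕ, Set (Matrix (Fin n) (Fin n) M))
    (f : ∀ n : ℕ, Matrix (Fin n) (Fin n) M → Matrix (Fin n) (Fin n) N)
    (hΩ : IsNCSet Ω) (hsi : SimInvariant R Ω)
    (hds : RespectsDirSums Ω f) (hsim : RespectsSim R Ω f)
    {n m : ℕ} (X : Matrix (Fin n) (Fin n) M) (Y : Matrix (Fin m) (Fin m) M)
    (T : Matrix (Fin n) (Fin m) R) (hX : X ∈ Ω n) (hY : Y ∈ Ω m)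
    (h : mulScal X T = scalMul T Y) :
    mulScal (f n X) T = scalMul T (f m Y) := by
  set e := (finSumFinEquiv : Fin n ⊕ Fin m ≃ Fin (n + m)) with he
  set S : Matrix (Fin (n + m)) (Fin (n + m)) R :=
    Matrix.reindex e e (Matrix.fromBlocks 1 T 0 1) with hS
  set S' : Matrix (Fin (n + m)) (Fin (n + m)) R :=
    Matrix.reindex e e (Matrix.fromBlocks 1 (-T) 0 1) with hS'
  have hmul : ∀ (T₁ T₂ : Matrix (Fin n) (Fin m) R), T₂ + T₁ = 0 →
      (Matrix.reindex e e (Matrix.fromBlocks (1 : Matrix (Fin n) (Fin n) R) T₁ 0 1)) *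
      (Matrix.reindex e e (Matrix.fromBlocks 1 T₂ 0 1)) = 1 := by
    intro T₁ T₂ h12
    rw [Matrix.reindex_apply, Matrix.reindex_apply, Matrix.submatrix_mul_equiv,
      Matrix.fromBlocks_multiply]
    simp only [Matrix.mul_one, Matrix.one_mul, Matrix.mul_zero, Matrix.zero_mul,
      add_zero, zero_add, h12, Matrix.fromBlocks_one]
    exact Matrix.submatrix_one_equiv e.symm
  have hSS' : S * S' = 1 := hmul _ _ (by simp)
  have hS'S : S' * S = 1 := hmul _ _ (by simp)
  have h' : muS X T = sMul T Y := h
  have keyM : scalMul S (mulScal (dSum X Y) S') =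
      Matrix.reindex e e (Matrix.fromBlocks X (-(muS X T) + sMul T Y) 0 Y) :=
    tri_conj T X Y
  have keyN : scalMul S (mulScal (dSum (f n X) (f m Y)) S') =
      Matrix.reindex e e
        (Matrix.fromBlocks (f n X) (-(muS (f n X) T) + sMul T (f m Y)) 0 (f m Y)) :=
    tri_conj T (f n X) (f m Y)
  have hW : dSum X Y ∈ Ω (n + m) := hΩ n m X Y hX hY
  have hkeyXY : scalMul S (mulScal (dSum X Y) S') = dSum X Y := by
    rw [keyM, h', neg_add_cancel]
    rfl
  have hsim' := hsim (n + m) (dSum X Y) S S' hW hSS' hS'S (by rw [hkeyXY]; exact hW)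
  rw [hkeyXY, hds n m X Y hX hY, keyN] at hsim'
  have h3 := (Matrix.reindex e e).injective
    (hsim'.symm.trans (rfl :
      dSum (f n X) (f m Y) =
        Matrix.reindex e e (Matrix.fromBlocks (f n X) 0 0 (f m Y))))
  have h4 : -(muS (f n X) T) + sMul T (f m Y) = 0 := by
    ext i j
    have := congrFun (congrFun h3 (Sum.inl i)) (Sum.inr j)
    simpa using this
  exact neg_add_eq_zero.mp h4

end Helpers3
section Helpers4

variable {R : Type*} [CommRing R] {M : Type*} [AddCommGroup M] [Module R M]

lemma bidiag_zero_eq {n : ℕ} (h : n = 1 * n)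
    (D : Fin 1 → Matrix (Fin n) (Fin n) M) (Z : Fin 0 → Matrix (Fin n) (Fin n) M) :
    bidiagC 0 D Z = Matrix.reindex (finCongr h) (finCongr h) (D 0) := by
  ext i j
  obtain ⟨⟨a, p⟩, rfl⟩ := finProdFinEquiv.surjective i
  obtain ⟨⟨b, q⟩, rfl⟩ := finProdFinEquiv.surjective j
  have ha : a = 0 := Fin.ext (by omega)
  have hb : b = 0 := Fin.ext (by omega)
  subst ha hb
  rw [bidiagC_apply, if_pos rfl]
  simp only [Matrix.reindex_apply, Matrix.submatrix_apply]
  congr 1 <;> exact Fin.ext (by simp [finProdFinEquiv_apply_val])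

lemma bidiag_succ_eq {n k : ℕ} (h : (k + 1) * n + n = (k + 2) * n)
    (D : Fin (k + 2) → Matrix (Fin n) (Fin n) M)
    (Z : Fin (k + 1) → Matrix (Fin n) (Fin n) M) :
    bidiagC (k + 1) D Z = Matrix.reindex (finCongr h) (finCongr h)
      (upTri (bidiagC k (fun i => D i.castSucc) (fun i => Z i.castSucc))
        (Matrix.of fun x q =>
          if (finProdFinEquiv.symm x).1 = Fin.last k then
            Z (Fin.last k) (finProdFinEquiv.symm x).2 q
          else 0)
        (D (Fin.last (k + 1)))) := by
  have E := (finSumFinEquiv (m := (k + 1) * n) (n := n)).trans (finCongr h)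
  have L1 : ∀ (a : Fin (k + 1)) (p : Fin n),
      (finSumFinEquiv.trans (finCongr h)) (Sum.inl (finProdFinEquiv (a, p)))
        = finProdFinEquiv (a.castSucc, p) := by
    intro a p
    apply Fin.ext
    simp [finProdFinEquiv_apply_val]
  have L2 : ∀ (p : Fin n),
      (finSumFinEquiv.trans (finCongr h)) (Sum.inr p)
        = finProdFinEquiv (Fin.last (k + 1), p) := by
    intro p
    apply Fin.ext
    simp [finProdFinEquiv_apply_val, Fin.val_last]
    ring
  ext i j
  obtain ⟨s, rfl⟩ := (finSumFinEquiv.trans (finCongr h)).surjective i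
  obtain ⟨t, rfl⟩ := (finSumFinEquiv.trans (finCongr h)).surjective j
  have hR : ∀ s t, (Matrix.reindex (finCongr h) (finCongr h)
      (upTri (bidiagC k (fun i => D i.castSucc) (fun i => Z i.castSucc))
        (Matrix.of fun x q =>
          if (finProdFinEquiv.symm x).1 = Fin.last k then
            Z (Fin.last k) (finProdFinEquiv.symm x).2 q
          else 0)
        (D (Fin.last (k + 1)))))
      ((finSumFinEquiv.trans (finCongr h)) s) ((finSumFinEquiv.trans (finCongr h)) t)
      = (Matrix.fromBlocks (bidiagC k (fun i => D i.castSucc) (fun i => Z i.castSucc))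
        (Matrix.of fun x q =>
          if (finProdFinEquiv.symm x).1 = Fin.last k then
            Z (Fin.last k) (finProdFinEquiv.symm x).2 q
          else 0)
        0 (D (Fin.last (k + 1)))) s t := by
    intro s t
    simp [upTri, Matrix.reindex_apply, Matrix.submatrix_apply, Equiv.trans_apply]
  rw [hR]
  cases s with
  | inl x =>
    obtain ⟨⟨a, p⟩, rfl⟩ := finProdFinEquiv.surjective x
    cases t with
    | inl y =>
      obtain ⟨⟨b, q⟩, rfl⟩ := finProdFinEquiv.surjective y
      rw [L1, L1, bidiagC_apply]
      show _ = bidiagC k (fun i => D i.castSucc) (fun i => Z i.castSucc)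
        (finProdFinEquiv (a, p)) (finProdFinEquiv (b, q))
      rw [bidiagC_apply]
      by_cases hab : a = b
      · subst hab
        rw [if_pos rfl, if_pos rfl]
      · rw [if_neg (by simpa [Fin.castSucc_inj] using hab), if_neg hab]
        by_cases hab1 : (a : ℕ) + 1 = (b : ℕ)
        · rw [dif_pos (by simpa using hab1), dif_pos hab1]
          congr 1 <;> exact Fin.ext (by simp)
        · rw [dif_neg (by simpa using hab1), dif_neg hab1]
    | inr q =>
      rw [L1, L2, bidiagC_apply]
      show _ = (Matrix.of fun x q =>
          if (finProdFinEquiv.symm x).1 = Fin.last k then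
            Z (Fin.last k) (finProdFinEquiv.symm x).2 q
          else 0) (finProdFinEquiv (a, p)) q
      simp only [Matrix.of_apply, Equiv.symm_apply_apply]
      rw [if_neg (Fin.castSucc_lt_last a).ne]
      by_cases ha : a = Fin.last k
      · subst ha
        rw [dif_pos (by simp), if_pos rfl]
        congr 1 <;> exact Fin.ext (by simp)
      · rw [dif_neg (by
          simp only [Fin.coe_castSucc, Fin.val_last]
          intro hc
          exact ha (Fin.ext (by simp only [Fin.val_last]; omega))), if_neg ha]
  | inr p =>
    cases t with
    | inl y =>
      obtain ⟨⟨b, q⟩, rfl⟩ := finProdFinEquiv.surjective y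
      rw [L2, L1, bidiagC_apply]
      show _ = (0 : Matrix (Fin n) (Fin ((k+1)*n)) M) p (finProdFinEquiv (b, q))
      rw [if_neg (Fin.castSucc_lt_last b).ne', dif_neg (by
        simp only [Fin.coe_castSucc, Fin.val_last]
        have := b.isLt
        omega)]
      simp
    | inr q =>
      rw [L2, L2, bidiagC_apply, if_pos rfl]
      rfl

lemma bidiag_mem (Ω : ∀ n : ℕ, Set (Matrix (Fin n) (Fin n) M))
    (hsi : SimInvariant R Ω) (hra : RightAdmissible R Ω) {n : ℕ} :
    ∀ (k : ℕ) (D : Fin (k + 1) → Matrix (Fin n) (Fin n) M)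
      (Z : Fin k → Matrix (Fin n) (Fin n) M),
      (∀ i, D i ∈ Ω n) → bidiagC k D Z ∈ Ω ((k + 1) * n) := by
  intro k
  induction k with
  | zero =>
    intro D Z hD
    rw [bidiag_zero_eq (one_mul n).symm]
    exact mem_cast Ω _ _ (hD 0)
  | succ k ih =>
    intro D Z hD
    rw [bidiag_succ_eq ((Nat.succ_mul (k + 1) n).symm)]
    exact mem_cast Ω _ _
      (upTri_mem (R := R) Ω hsi hra _ _ _ (ih _ _ (fun i => hD _)) (hD _))

end Helpers4
section Helpers5

variable {R : Type*} [CommRing R] {M : Type*} [AddCommGroup M] [Module R M]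

/-- Column of identity blocks. -/
def colT (R : Type*) [CommRing R] (m n : ℕ) : Matrix (Fin (m * n)) (Fin n) R :=
  Matrix.of fun i j => if (finProdFinEquiv.symm i).2 = j then 1 else 0

lemma colT_apply (R : Type*) [CommRing R] {m n : ℕ} (a : Fin m) (p : Fin n) (j : Fin n) :
    colT R m n (finProdFinEquiv (a, p)) j = if p = j then 1 else 0 := by
  simp only [colT, Matrix.of_apply, Equiv.symm_apply_apply]

/-- Block inclusion matrix. -/
def incT (R : Type*) [CommRing R] (m l n : ℕ) : Matrix (Fin (m * n)) (Fin (l * n)) R :=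
  Matrix.of fun i j =>
    if ((finProdFinEquiv.symm i).1 : ℕ) = ((finProdFinEquiv.symm j).1 : ℕ) ∧
        (finProdFinEquiv.symm i).2 = (finProdFinEquiv.symm j).2 then 1 else 0

lemma incT_apply (R : Type*) [CommRing R] {m l n : ℕ} (a : Fin m) (p : Fin n)
    (b : Fin l) (q : Fin n) :
    incT R m l n (finProdFinEquiv (a, p)) (finProdFinEquiv (b, q)) =
      if (a : ℕ) = (b : ℕ) ∧ p = q then 1 else 0 := by
  simp only [incT, Matrix.of_apply, Equiv.symm_apply_apply]

variable {β : Type*} [AddCommGroup β] [Module R β]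

lemma colT_collapse {m n : ℕ} (W : Matrix (Fin (m * n)) (Fin (m * n)) β)
    (i0 : Fin (m * n)) (j : Fin n) :
    (∑ k, colT R m n k j • W i0 k) = ∑ b : Fin m, W i0 (finProdFinEquiv (b, j)) := by
  rw [sum_blocks (fun k => colT R m n k j • W i0 k)]
  refine Finset.sum_congr rfl fun b _ => ?_
  simp [colT_apply, ite_smul, one_smul, zero_smul, Finset.sum_ite_eq']

lemma colT_right {m n : ℕ} (V : Matrix (Fin n) (Fin n) β) (a : Fin m) (p : Fin n)
    (j : Fin n) :
    (∑ k, colT R m n (finProdFinEquiv (a, p)) k • V k j) = V p j := by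
  simp [colT_apply, ite_smul, one_smul, zero_smul, Finset.sum_ite_eq]

lemma incT_collapseL {m l n : ℕ} (W : Matrix (Fin (m * n)) (Fin (m * n)) β)
    (i0 : Fin (m * n)) (b : Fin l) (q : Fin n) :
    (∑ k, incT R m l n k (finProdFinEquiv (b, q)) • W i0 k) =
      if h : (b : ℕ) < m then W i0 (finProdFinEquiv ((⟨(b : ℕ), h⟩ : Fin m), q)) else 0 := by
  rw [sum_blocks (fun k => incT R m l n k (finProdFinEquiv (b, q)) • W i0 k)]
  simp only [incT_apply, ite_smul, one_smul, zero_smul]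
  exact collapseL (b : ℕ) q (fun c r => W i0 (finProdFinEquiv (c, r)))

lemma incT_collapseR {m l n : ℕ} (V : Matrix (Fin (l * n)) (Fin (l * n)) β)
    (a : Fin m) (p : Fin n) (j0 : Fin (l * n)) :
    (∑ k, incT R m l n (finProdFinEquiv (a, p)) k • V k j0) =
      if h : (a : ℕ) < l then V (finProdFinEquiv ((⟨(a : ℕ), h⟩ : Fin l), p)) j0 else 0 := by
  rw [sum_blocks (fun k => incT R m l n (finProdFinEquiv (a, p)) k • V k j0)]
  simp only [incT_apply, ite_smul, one_smul, zero_smul]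
  exact collapseR (a : ℕ) p (fun c r => V (finProdFinEquiv (c, r)) j0)

lemma AT_eq {n : ℕ} (X Y : Matrix (Fin n) (Fin n) M) (Nn : ℕ) :
    mulScal (bidiagC (Nn + 1) (fun i => if i = Fin.last (Nn + 1) then X else Y)
        (fun _ => X - Y)) (colT R (Nn + 2) n)
      = scalMul (colT R (Nn + 2) n) X := by
  ext i j
  obtain ⟨⟨a, p⟩, rfl⟩ := finProdFinEquiv.surjective i
  show (∑ k, colT R (Nn + 2) n k j •
      bidiagC (Nn + 1) (fun i => if i = Fin.last (Nn + 1) then X else Y) (fun _ => X - Y)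
        (finProdFinEquiv (a, p)) k)
    = ∑ k, colT R (Nn + 2) n (finProdFinEquiv (a, p)) k • X k j
  rw [colT_collapse, colT_right]
  have hterm : ∀ b : Fin (Nn + 2),
      bidiagC (Nn + 1) (fun i => if i = Fin.last (Nn + 1) then X else Y) (fun _ => X - Y)
        (finProdFinEquiv (a, p)) (finProdFinEquiv (b, j))
        = (if (b : ℕ) = (a : ℕ) then (if a = Fin.last (Nn + 1) then X else Y) p j else 0)
          + (if (b : ℕ) = (a : ℕ) + 1 then (X - Y) p j else 0) := by
    intro b
    rw [bidiagC_apply]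
    by_cases h1 : a = b
    · subst h1
      rw [if_pos (rfl : a = a), if_pos (rfl : (a : ℕ) = (a : ℕ)),
        if_neg (show ¬((a : ℕ) = (a : ℕ) + 1) by omega), add_zero]
    · rw [if_neg h1, if_neg (fun hc => h1 (Fin.ext hc.symm)), zero_add]
      by_cases h2 : (a : ℕ) + 1 = (b : ℕ)
      · rw [dif_pos h2, if_pos (by omega)]
      · rw [dif_neg h2, if_neg (by omega)]
  rw [Finset.sum_congr rfl (fun b _ => hterm b), Finset.sum_add_distrib,
    sum_fin_val, sum_fin_val, dif_pos a.isLt]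
  by_cases ha : a = Fin.last (Nn + 1)
  · rw [if_pos ha, dif_neg (by rw [ha]; simp), add_zero]
  · have ha' : (a : ℕ) ≠ Nn + 1 := fun hc => ha (Fin.ext (by simp [hc]))
    have := a.isLt
    rw [if_neg ha, dif_pos (by omega)]
    simp [Matrix.sub_apply]

end Helpers5
/-- **Taylor–Taylor formula.** For a nc function `f` on a similarity
invariant right admissible nc set `Ω` and `X, Y ∈ Ω_n`, the bidiagonal matrices with
diagonal blocks `Y,…,Y` (resp. `Y,…,Y,X`) and superdiagonal blocks `X−Y` lie in `Ω`,
and for every `N`, `f(X) = ∑_{ℓ=0}^{N} D_ℓ + R_{N+1}`, where `D_ℓ` and `R_{N+1}` are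
the indicated upper right corner blocks. -/
theorem taylor_taylor_formula
    {R : Type*} [CommRing R] {M : Type*} [AddCommGroup M] [Module R M]
    {N : Type*} [AddCommGroup N] [Module R N]
    (Ω : ∀ n : ℕ, Set (Matrix (Fin n) (Fin n) M))
    (f : ∀ n : ℕ, Matrix (Fin n) (Fin n) M → Matrix (Fin n) (Fin n) N)
    (hΩ : IsNCSet Ω) (hsi : SimInvariant R Ω) (hra : RightAdmissible R Ω)
    (hds : RespectsDirSums Ω f) (hsim : RespectsSim R Ω f)
    {n : ℕ} (X Y : Matrix (Fin n) (Fin n) M) (hX : X ∈ Ω n) (hY : Y ∈ Ω n) :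
    (∀ l : ℕ, bidiagC l (fun _ => Y) (fun _ => X - Y) ∈ Ω ((l + 1) * n)) ∧
    (∀ Nn : ℕ,
      bidiagC (Nn + 1) (fun i => if i = Fin.last (Nn + 1) then X else Y) (fun _ => X - Y)
        ∈ Ω ((Nn + 2) * n)) ∧
    ∀ Nn : ℕ,
      f n X =
        (∑ l ∈ Finset.range (Nn + 1),
          blkAt l 0 (Fin.last l)
            (f ((l + 1) * n) (bidiagC l (fun _ => Y) (fun _ => X - Y)))) +
        blkAt (Nn + 1) 0 (Fin.last (Nn + 1))
          (f ((Nn + 2) * n)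
            (bidiagC (Nn + 1) (fun i => if i = Fin.last (Nn + 1) then X else Y)
              (fun _ => X - Y))) := by
  have part1 : ∀ l : ℕ, bidiagC l (fun _ => Y) (fun _ => X - Y) ∈ Ω ((l + 1) * n) :=
    fun l => bidiag_mem (R := R) Ω hsi hra l _ _ (fun _ => hY)
  have part2 : ∀ Nn : ℕ,
      bidiagC (Nn + 1) (fun i => if i = Fin.last (Nn + 1) then X else Y) (fun _ => X - Y)
        ∈ Ω ((Nn + 2) * n) := by
    intro Nn
    refine bidiag_mem (R := R) Ω hsi hra (Nn + 1) _ _ (fun i => ?_)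
    by_cases h : i = Fin.last (Nn + 1)
    · rw [if_pos h]; exact hX
    · rw [if_neg h]; exact hY
  refine ⟨part1, part2, ?_⟩
  intro Nn
  set A := bidiagC (Nn + 1) (fun i => if i = Fin.last (Nn + 1) then X else Y)
    (fun _ => X - Y) with hA
  have hAmem : A ∈ Ω ((Nn + 2) * n) := part2 Nn
  have hfa := respects_intert Ω f hΩ hsi hds hsim A X (colT R (Nn + 2) n) hAmem hX
    (AT_eq X Y Nn)
  have hfX : ∀ (p j : Fin n),
      f n X p j = ∑ b : Fin (Nn + 2),
        f ((Nn + 2) * n) A (finProdFinEquiv ((0 : Fin (Nn + 2)), p))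
          (finProdFinEquiv (b, j)) := by
    intro p j
    have h1 : (∑ k, colT R (Nn + 2) n k j •
          (f ((Nn + 2) * n) A) (finProdFinEquiv ((0 : Fin (Nn + 2)), p)) k)
        = ∑ k, colT R (Nn + 2) n (finProdFinEquiv ((0 : Fin (Nn + 2)), p)) k •
            (f n X) k j :=
      congrFun (congrFun hfa (finProdFinEquiv ((0 : Fin (Nn + 2)), p))) j
    rw [colT_collapse, colT_right] at h1
    exact h1.symm
  have hblock : ∀ (l : ℕ) (hl : l ≤ Nn) (hlt : l < Nn + 2) (p q : Fin n),
      f ((Nn + 2) * n) A (finProdFinEquiv ((0 : Fin (Nn + 2)), p))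
          (finProdFinEquiv ((⟨l, hlt⟩ : Fin (Nn + 2)), q))
        = f ((l + 1) * n) (bidiagC l (fun _ => Y) (fun _ => X - Y))
            (finProdFinEquiv ((0 : Fin (l + 1)), p)) (finProdFinEquiv (Fin.last l, q)) := by
    intro l hl hlt p q
    have hintl : mulScal A (incT R (Nn + 2) (l + 1) n)
        = scalMul (incT R (Nn + 2) (l + 1) n) (bidiagC l (fun _ => Y) (fun _ => X - Y)) := by
      ext i j
      obtain ⟨⟨a, p'⟩, rfl⟩ := finProdFinEquiv.surjective i
      obtain ⟨⟨b, q'⟩, rfl⟩ := finProdFinEquiv.surjective j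
      show (∑ k, incT R (Nn + 2) (l + 1) n k (finProdFinEquiv (b, q')) •
          A (finProdFinEquiv (a, p')) k)
        = ∑ k, incT R (Nn + 2) (l + 1) n (finProdFinEquiv (a, p')) k •
            bidiagC l (fun _ => Y) (fun _ => X - Y) k (finProdFinEquiv (b, q'))
      have hb2 : (b : ℕ) < Nn + 2 := by have := b.isLt; omega
      rw [incT_collapseL, incT_collapseR, dif_pos hb2, hA, bidiagC_apply]
      by_cases h1 : (a : ℕ) = (b : ℕ)
      · have hlt1 : (a : ℕ) < l + 1 := by have := b.isLt; omega
        have hab : a = (⟨(b : ℕ), hb2⟩ : Fin (Nn + 2)) := Fin.ext (by simpa using h1)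
        have hal : ¬(a = Fin.last (Nn + 1)) := fun hc => by
          have h' : (a : ℕ) = Nn + 1 := by rw [hc]; simp
          have := b.isLt; omega
        have hab' : (⟨(a : ℕ), hlt1⟩ : Fin (l + 1)) = b := Fin.ext (by simpa using h1)
        rw [if_pos hab, if_neg hal, dif_pos hlt1, bidiagC_apply, if_pos hab']
      · have hab : ¬(a = (⟨(b : ℕ), hb2⟩ : Fin (Nn + 2))) := fun hc => h1 (by rw [hc])
        rw [if_neg hab]
        by_cases h2 : (a : ℕ) + 1 = (b : ℕ)
        · have hlt1 : (a : ℕ) < l + 1 := by have := b.isLt; omega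
          have hab' : ¬((⟨(a : ℕ), hlt1⟩ : Fin (l + 1)) = b) := fun hc => h1 (by
            have := congrArg Fin.val hc; simpa using this)
          rw [dif_pos (show (a : ℕ) + 1 = (((⟨(b : ℕ), hb2⟩ : Fin (Nn + 2))) : ℕ) by
              simpa using h2),
            dif_pos hlt1, bidiagC_apply, if_neg hab',
            dif_pos (show (((⟨(a : ℕ), hlt1⟩ : Fin (l + 1))) : ℕ) + 1 = (b : ℕ) by
              simpa using h2)]
        · have h2' : ¬((a : ℕ) + 1 = (((⟨(b : ℕ), hb2⟩ : Fin (Nn + 2))) : ℕ)) := by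
            simpa using h2
          rw [dif_neg h2']
          by_cases h3 : (a : ℕ) < l + 1
          · have hab' : ¬((⟨(a : ℕ), h3⟩ : Fin (l + 1)) = b) := fun hc => h1 (by
              have := congrArg Fin.val hc; simpa using this)
            rw [dif_pos h3, bidiagC_apply, if_neg hab', dif_neg (by simpa using h2)]
          · rw [dif_neg h3]
    have key2 := respects_intert Ω f hΩ hsi hds hsim A
      (bidiagC l (fun _ => Y) (fun _ => X - Y)) (incT R (Nn + 2) (l + 1) n)
      hAmem (part1 l) hintl
    have h1 : (∑ k, incT R (Nn + 2) (l + 1) n k (finProdFinEquiv (Fin.last l, q)) •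
          (f ((Nn + 2) * n) A) (finProdFinEquiv ((0 : Fin (Nn + 2)), p)) k)
        = ∑ k, incT R (Nn + 2) (l + 1) n (finProdFinEquiv ((0 : Fin (Nn + 2)), p)) k •
            (f ((l + 1) * n) (bidiagC l (fun _ => Y) (fun _ => X - Y))) k
              (finProdFinEquiv (Fin.last l, q)) :=
      congrFun (congrFun key2 (finProdFinEquiv ((0 : Fin (Nn + 2)), p)))
        (finProdFinEquiv (Fin.last l, q))
    rw [incT_collapseL, incT_collapseR,
      dif_pos (show ((Fin.last l : Fin (l + 1)) : ℕ) < Nn + 2 by simp; omega),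
      dif_pos (show ((0 : Fin (Nn + 2)) : ℕ) < l + 1 by simp)] at h1
    have e1 : (⟨((Fin.last l : Fin (l + 1)) : ℕ), by simp; omega⟩ : Fin (Nn + 2))
        = ⟨l, hlt⟩ := Fin.ext (by simp)
    have e2 : (⟨((0 : Fin (Nn + 2)) : ℕ), by simp⟩ : Fin (l + 1)) = 0 := Fin.ext (by simp)
    rw [e1, e2] at h1
    exact h1
  have hsum : f n X = ∑ b : Fin (Nn + 2),
      blkAt (Nn + 1) (0 : Fin (Nn + 2)) b (f ((Nn + 2) * n) A) := by
    ext p j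
    rw [Matrix.sum_apply]
    simpa only [blkAt_apply] using hfX p j
  rw [Fin.sum_univ_castSucc] at hsum
  have hterm : ∀ c : Fin (Nn + 1),
      blkAt (Nn + 1) (0 : Fin (Nn + 2)) c.castSucc (f ((Nn + 2) * n) A)
        = blkAt (c : ℕ) 0 (Fin.last (c : ℕ))
            (f (((c : ℕ) + 1) * n) (bidiagC (c : ℕ) (fun _ => Y) (fun _ => X - Y))) := by
    intro c
    ext p q
    rw [blkAt_apply, blkAt_apply]
    have hc2 : (c : ℕ) < Nn + 2 := by omega
    rw [show c.castSucc = (⟨(c : ℕ), hc2⟩ : Fin (Nn + 2)) from Fin.ext (by simp)]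
    exact hblock (c : ℕ) (by omega) hc2 p q
  rw [Finset.sum_congr rfl (fun c _ => hterm c),
    Fin.sum_univ_eq_sum_range (fun l => blkAt l 0 (Fin.last l)
      (f ((l + 1) * n) (bidiagC l (fun _ => Y) (fun _ => X - Y)))) (Nn + 1)] at hsum
  exact hsum
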